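/- Let (λ,ψ) be a symmetric non-trivial Bayes–Nash equilibrium of a crowdfunding game Γ(n,B,μ,p,τ). If τ < p_l then λ = 1, and if τ < p_h then ψ = 1. -/
import Mathlib


open Finset Filter

/-- Upper tail of a Binomial(m,γ): probability of at least `k` successes in `m` trials. -/
noncomputable def phi (γ : ℝ) (m k : ℕ) : ℝ :=
  ∑ j ∈ Finset.Icc k m, (m.choose j : ℝ) * γ ^ j * (1 - γ) ^ (m - j)

/-- Posterior probability of state H given a low signal. -/
noncomputable def pLow (μ p : ℝ) : ℝ := (1 - p) * μ / ((1 - p) * μ + p * (1 - μ))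

/-- Posterior probability of state H given a high signal. -/
noncomputable def pHigh (μ p : ℝ) : ℝ := p * μ / (p * μ + (1 - p) * (1 - μ))

/-- Probability that a player contributes in state H under symmetric strategy (lam, psi). -/
noncomputable def alphaH (p lam psi : ℝ) : ℝ := p * psi + (1 - p) * lam

/-- Probability that a player contributes in state L under symmetric strategy (lam, psi). -/
noncomputable def alphaL (p lam psi : ℝ) : ℝ := (1 - p) * psi + p * lam

/-- Expected utility of contributing for a low-signal player. -/
noncomputable def Ulow (n B : ℕ) (μ p τ lam psi : ℝ) : ℝ :=
  pLow μ p * (1 - τ) * phi (alphaH p lam psi) (n - 1) (B - 1)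
    - (1 - pLow μ p) * τ * phi (alphaL p lam psi) (n - 1) (B - 1)

/-- Expected utility of contributing for a high-signal player. -/
noncomputable def Uhigh (n B : ℕ) (μ p τ lam psi : ℝ) : ℝ :=
  pHigh μ p * (1 - τ) * phi (alphaH p lam psi) (n - 1) (B - 1)
    - (1 - pHigh μ p) * τ * phi (alphaL p lam psi) (n - 1) (B - 1)

/-- (lam, psi) is a symmetric Bayes–Nash equilibrium of Γ(n,B,μ,p,τ). -/
def IsSymmEq (n B : ℕ) (μ p τ lam psi : ℝ) : Prop :=
  lam ∈ Set.Icc (0:ℝ) 1 ∧ psi ∈ Set.Icc (0:ℝ) 1 ∧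
    (0 < lam → 0 ≤ Ulow n B μ p τ lam psi) ∧
    (lam < 1 → Ulow n B μ p τ lam psi ≤ 0) ∧
    (0 < psi → 0 ≤ Uhigh n B μ p τ lam psi) ∧
    (psi < 1 → Uhigh n B μ p τ lam psi ≤ 0)

/-- The strategy profile (lam, psi) is non-trivial: the good is supplied with
positive probability. -/
def NonTrivial (n B : ℕ) (μ p lam psi : ℝ) : Prop :=
  0 < μ * phi (alphaH p lam psi) n B + (1 - μ) * phi (alphaL p lam psi) n B

/-- The correctness index of Γ(n,B,μ,p,τ) at the symmetric strategy (lam, psi). -/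
noncomputable def thetaIdx (n B : ℕ) (μ p lam psi : ℝ) : ℝ :=
  μ * phi (alphaH p lam psi) n B + (1 - μ) * (1 - phi (alphaL p lam psi) n B)

/-- Expected fraction of contributors collected from a Binomial(n,γ) number of
contributors, counted only when the threshold B is met. -/
noncomputable def tailExp (γ : ℝ) (n B : ℕ) : ℝ :=
  ∑ j ∈ Finset.Icc B n, ((j : ℝ) / n) * (n.choose j : ℝ) * γ ^ j * (1 - γ) ^ (n - j)

/-- The participation index of Γ(n,B,μ,p,τ) at the symmetric strategy (lam, psi). -/
noncomputable def partIdx (n B : ℕ) (μ p lam psi : ℝ) : ℝ :=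
  μ * tailExp (alphaH p lam psi) n B + (1 - μ) * tailExp (alphaL p lam psi) n B

lemma phi_term_nonneg {γ : ℝ} (h0 : 0 ≤ γ) (h1 : γ ≤ 1) (m j : ℕ) :
    0 ≤ (m.choose j : ℝ) * γ ^ j * (1 - γ) ^ (m - j) :=
  mul_nonneg (mul_nonneg (Nat.cast_nonneg _) (pow_nonneg h0 _)) (pow_nonneg (by linarith) _)

lemma phi_nonneg {γ : ℝ} (h0 : 0 ≤ γ) (h1 : γ ≤ 1) (m k : ℕ) : 0 ≤ phi γ m k :=
  Finset.sum_nonneg fun j _ => phi_term_nonneg h0 h1 m j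

lemma phi_anti {γ : ℝ} (h0 : 0 ≤ γ) (h1 : γ ≤ 1) (m : ℕ) {k k' : ℕ} (h : k' ≤ k) :
    phi γ m k ≤ phi γ m k' :=
  Finset.sum_le_sum_of_subset_of_nonneg (Finset.Icc_subset_Icc_left h)
    (fun j _ _ => phi_term_nonneg h0 h1 m j)

lemma phi_pos {γ : ℝ} (h0 : 0 < γ) (h1 : γ ≤ 1) {m k : ℕ} (hkm : k ≤ m) : 0 < phi γ m k := by
  have hm : m ∈ Finset.Icc k m := Finset.mem_Icc.mpr ⟨hkm, le_refl m⟩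
  have hterm : (0:ℝ) < (m.choose m : ℝ) * γ ^ m * (1 - γ) ^ (m - m) := by
    simp [Nat.choose_self, pow_pos h0]
  exact lt_of_lt_of_le hterm (Finset.single_le_sum (fun j _ => phi_term_nonneg h0.le h1 m j) hm)

lemma phi_zero_left {m k : ℕ} (hk : 1 ≤ k) : phi 0 m k = 0 := by
  apply Finset.sum_eq_zero
  intro j hj
  have : 1 ≤ j := le_trans hk (Finset.mem_Icc.mp hj).1
  rw [zero_pow (by omega)]
  ring

lemma phi_zero_right (γ : ℝ) (m : ℕ) : phi γ m 0 = 1 := by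
  have h : Finset.Icc 0 m = Finset.range (m + 1) := by
    ext j; simp [Nat.lt_succ_iff]
  rw [phi, h]
  have h2 := add_pow γ (1 - γ) m
  rw [show γ + (1 - γ) = (1:ℝ) by ring, one_pow] at h2
  calc ∑ j ∈ Finset.range (m + 1), (m.choose j : ℝ) * γ ^ j * (1 - γ) ^ (m - j)
      = ∑ j ∈ Finset.range (m + 1), γ ^ j * (1 - γ) ^ (m - j) * (m.choose j : ℝ) :=
        Finset.sum_congr rfl fun j _ => by ring
    _ = 1 := h2.symm

lemma phi_pascal (γ : ℝ) (m k : ℕ) (hk : 1 ≤ k) :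
    phi γ (m + 1) k = γ * phi γ m (k - 1) + (1 - γ) * phi γ m k := by
  obtain ⟨k', rfl⟩ : ∃ k', k = k' + 1 := ⟨k - 1, by omega⟩
  simp only [Nat.add_sub_cancel]
  rcases le_or_gt (k' + 1) (m + 1) with hkm | hkm
  · have hmap : Finset.Icc (k' + 1) (m + 1) = (Finset.Icc k' m).map (addRightEmbedding 1) := by
      rw [Finset.map_add_right_Icc]
    have hB : ∑ i ∈ Finset.Icc k' m,
        ((m.choose (i + 1) : ℝ) * γ ^ (i + 1) * (1 - γ) ^ (m - (i + 1))) =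
        ∑ j ∈ Finset.Icc (k' + 1) m, ((m.choose j : ℝ) * γ ^ j * (1 - γ) ^ (m - j)) := by
      have h1 : ∑ i ∈ Finset.Icc k' m,
          ((m.choose (i + 1) : ℝ) * γ ^ (i + 1) * (1 - γ) ^ (m - (i + 1))) =
          ∑ j ∈ Finset.Icc (k' + 1) (m + 1),
            ((m.choose j : ℝ) * γ ^ j * (1 - γ) ^ (m - j)) := by
        rw [hmap, Finset.sum_map]
        simp only [addRightEmbedding_apply]
      rw [h1, Finset.sum_Icc_succ_top (by omega : k' + 1 ≤ m + 1)]
      simp [Nat.choose_succ_self]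
    have hsplit : ∀ i ∈ Finset.Icc k' m,
        (((m + 1).choose (i + 1) : ℝ)) * γ ^ (i + 1) * (1 - γ) ^ (m + 1 - (i + 1)) =
          γ * ((m.choose i : ℝ) * γ ^ i * (1 - γ) ^ (m - i))
          + (1 - γ) * ((m.choose (i + 1) : ℝ) * γ ^ (i + 1) * (1 - γ) ^ (m - (i + 1))) := by
      intro i hi
      have him : i ≤ m := (Finset.mem_Icc.mp hi).2
      rcases eq_or_lt_of_le him with rfl | hlt
      · simp [Nat.choose_succ_succ, Nat.choose_succ_self, pow_succ]
        ring
      · have h1 : m + 1 - (i + 1) = m - i := by omega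
        have h2 : m - i = (m - (i + 1)) + 1 := by omega
        rw [Nat.choose_succ_succ, h1, h2]
        push_cast
        ring
    rw [phi, hmap, Finset.sum_map]
    simp only [addRightEmbedding_apply]
    rw [Finset.sum_congr rfl hsplit, Finset.sum_add_distrib, ← Finset.mul_sum, ← Finset.mul_sum,
      hB]
    simp only [phi]
  · rw [phi, phi, phi, Finset.Icc_eq_empty (by omega : ¬ (k' + 1) ≤ m + 1),
      Finset.Icc_eq_empty (by omega : ¬ k' ≤ m), Finset.Icc_eq_empty (by omega : ¬ (k' + 1) ≤ m)]
    simp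

lemma phi_mono (m : ℕ) : ∀ (k : ℕ) {a b : ℝ}, 0 ≤ a → a ≤ b → b ≤ 1 →
    phi a m k ≤ phi b m k := by
  induction m with
  | zero =>
    intro k a b ha hab hb
    rcases Nat.eq_zero_or_pos k with rfl | hk
    · simp [phi]
    · rw [phi, phi, Finset.Icc_eq_empty (by omega : ¬ k ≤ 0)]
      simp
  | succ m ih =>
    intro k a b ha hab hb
    rcases Nat.eq_zero_or_pos k with rfl | hk
    · rw [phi_zero_right, phi_zero_right]
    · have hb0 : 0 ≤ b := le_trans ha hab
      have ha1 : a ≤ 1 := le_trans hab hb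
      rw [phi_pascal a m k hk, phi_pascal b m k hk]
      have h1 : phi a m (k - 1) ≤ phi b m (k - 1) := ih _ ha hab hb
      have h2 : phi a m k ≤ phi b m k := ih _ ha hab hb
      have h3 : phi b m k ≤ phi b m (k - 1) := phi_anti hb0 hb m (by omega)
      nlinarith [phi_nonneg hb0 hb m k]

set_option maxHeartbeats 1000000 in
/-- if the price is below a posterior, that type surely contributes
in any symmetric non-trivial equilibrium. -/
theorem stmt5 (n B : ℕ) (μ p τ : ℝ) (hn : 1 ≤ n) (hB1 : 1 ≤ B) (hB2 : B ≤ n)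
    (hμ : μ ∈ Set.Ioo (0:ℝ) 1) (hp : p ∈ Set.Ioo (1/2 : ℝ) 1) (hτ : τ ∈ Set.Ioo (0:ℝ) 1)
    (lam psi : ℝ)
    (heq : IsSymmEq n B μ p τ lam psi) (hnt : NonTrivial n B μ p lam psi) :
    (τ < pLow μ p → lam = 1) ∧ (τ < pHigh μ p → psi = 1) := by
  obtain ⟨hμ0, hμ1⟩ := hμ
  obtain ⟨hp2, hp1⟩ := hp
  obtain ⟨hτ0, hτ1⟩ := hτ
  obtain ⟨⟨hl0, hl1⟩, ⟨hs0, hs1⟩, hU1, hU2, hU3, hU4⟩ := heq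
  have hp0 : (0:ℝ) < p := by linarith
  have hq0 : (0:ℝ) < 1 - p := by linarith
  set a := alphaH p lam psi with ha_def
  set b := alphaL p lam psi with hb_def
  have haval : a = p * psi + (1 - p) * lam := rfl
  have hbval : b = (1 - p) * psi + p * lam := rfl
  have ha0 : 0 ≤ a := by rw [haval]; nlinarith
  have ha1 : a ≤ 1 := by rw [haval]; nlinarith
  have hb0 : 0 ≤ b := by rw [hbval]; nlinarith
  have hb1 : b ≤ 1 := by rw [hbval]; nlinarith
  -- posterior facts
  have hdl : (0:ℝ) < (1 - p) * μ + p * (1 - μ) := by nlinarith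
  have hdh : (0:ℝ) < p * μ + (1 - p) * (1 - μ) := by nlinarith
  have hpl0 : 0 < pLow μ p := div_pos (by nlinarith) hdl
  have hpl1 : pLow μ p < 1 := by rw [pLow, div_lt_one hdl]; nlinarith
  have hph0 : 0 < pHigh μ p := div_pos (by nlinarith) hdh
  have hph1 : pHigh μ p < 1 := by rw [pHigh, div_lt_one hdh]; nlinarith
  have hplh : pLow μ p < pHigh μ p := by
    rw [pLow, pHigh, div_lt_div_iff₀ hdl hdh]
    nlinarith [mul_pos (mul_pos hμ0 (by linarith : (0:ℝ) < 1 - μ)) (by linarith : (0:ℝ) < 2*p - 1)]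
  have hBn : B - 1 ≤ n - 1 := Nat.sub_le_sub_right hB2 1
  -- Step 1 : lam ≤ psi
  have hlp : lam ≤ psi := by
    by_contra h
    push_neg at h
    have hlam : 0 < lam := lt_of_le_of_lt hs0 h
    have hUl := hU1 hlam
    have hUh := hU4 (lt_of_lt_of_le h hl1)
    have hapos : 0 < a := by rw [haval]; nlinarith
    have hφH : 0 < phi a (n-1) (B-1) := phi_pos hapos ha1 hBn
    have hφL : 0 ≤ phi b (n-1) (B-1) := phi_nonneg hb0 hb1 _ _
    have hdiff : Uhigh n B μ p τ lam psi - Ulow n B μ p τ lam psi =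
        (pHigh μ p - pLow μ p) * ((1-τ) * phi a (n-1) (B-1) + τ * phi b (n-1) (B-1)) := by
      simp only [Uhigh, Ulow, ← ha_def, ← hb_def]; ring
    nlinarith [mul_pos (sub_pos.mpr hplh)
      (by nlinarith : (0:ℝ) < (1-τ) * phi a (n-1) (B-1) + τ * phi b (n-1) (B-1))]
  have hba : b ≤ a := by rw [haval, hbval]; nlinarith
  -- Step 2 : a > 0
  have hapos : 0 < a := by
    rcases lt_or_eq_of_le ha0 with h | h
    · exact h
    · exfalso
      have hpsi0 : psi = 0 := by nlinarith [haval]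
      have hlam0 : lam = 0 := by nlinarith [haval]
      have hbz : b = 0 := by rw [hbval, hpsi0, hlam0]; ring
      have haz : a = 0 := h.symm
      have := hnt
      rw [NonTrivial, ← ha_def, ← hb_def, haz, hbz, phi_zero_left hB1] at this
      simp at this
  have hφH : 0 < phi a (n-1) (B-1) := phi_pos hapos ha1 hBn
  have hφLle : phi b (n-1) (B-1) ≤ phi a (n-1) (B-1) := phi_mono _ _ hb0 hba ha1
  have hφL0 : 0 ≤ phi b (n-1) (B-1) := phi_nonneg hb0 hb1 _ _
  constructor
  · intro hτpl
    by_contra h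
    have hlt : lam < 1 := lt_of_le_of_ne hl1 h
    have hUl := hU2 hlt
    rw [Ulow, ← ha_def, ← hb_def] at hUl
    nlinarith [mul_pos (sub_pos.mpr hτpl) hφH,
      mul_le_mul_of_nonneg_left hφLle (by nlinarith : (0:ℝ) ≤ (1 - pLow μ p) * τ)]
  · intro hτph
    by_contra h
    have hlt : psi < 1 := lt_of_le_of_ne hs1 h
    have hUh := hU4 hlt
    rw [Uhigh, ← ha_def, ← hb_def] at hUh
    nlinarith [mul_pos (sub_pos.mpr hτph) hφH,
      mul_le_mul_of_nonneg_left hφLle (by nlinarith : (0:ℝ) ≤ (1 - pHigh μ p) * τ)]
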